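/- arXiv:1408.6719 — 3 statements merged into one kernel-verified Lean document; each statement's English description precedes it below -/
import Mathlib

section
/- For star bodies K, L about the origin in ℝ^n and φ ∈ Φ, and any T ∈ GL(n), the dual Orlicz mixed volume satisfies Ṽ_φ(TK, L) = |det T| · Ṽ_φ(K, T^{-1}L). -/
/-! Polar coordinates turn `Ṽ_φ(K, L)` into the volume integral `∫_K φ(ρ_K / ρ_L) dx`: the
integrand is constant on rays and `∫_0^{ρ_K(u)} r^(n-1) dr = ρ_K(u)^n / n`. Since
`ρ_{TK}(Tx) = ρ_K(x)` and `ρ_L(Tx) = ρ_{T⁻¹L}(x)`, the substitution `x = Ty` in this volume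
integral produces the factor `|det T|`. -/

open MeasureTheory Metric Set

noncomputable section

/-- The radial function of a set: `ρ_K x = sup {r ≥ 0 : r • x ∈ K}`. -/
def radialFn {n : ℕ} (K : Set (EuclideanSpace ℝ (Fin n))) (x : EuclideanSpace ℝ (Fin n)) : ℝ :=
  sSup {r : ℝ | 0 ≤ r ∧ r • x ∈ K}

/-- A star body about the origin: compact, with `0` in its interior, star-shaped
with respect to the origin, and with continuous radial function on the sphere. -/
def IsStarBody {n : ℕ} (K : Set (EuclideanSpace ℝ (Fin n))) : Prop :=
  IsCompact K ∧ (0 : EuclideanSpace ℝ (Fin n)) ∈ interior K ∧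
    (∀ x ∈ K, ∀ t : ℝ, t ∈ Icc (0 : ℝ) 1 → t • x ∈ K) ∧
    Continuous fun u : sphere (0 : EuclideanSpace ℝ (Fin n)) 1 => radialFn K u

/-- The spherical Lebesgue measure on the unit sphere `S^{n-1}`. -/
def sphereMeasure (n : ℕ) : Measure (sphere (0 : EuclideanSpace ℝ (Fin n)) 1) :=
  (volume : Measure (EuclideanSpace ℝ (Fin n))).toSphere

/-- The dual Orlicz mixed volume
`Ṽ_φ(K,L) = ∫_{S^{n-1}} φ (ρ_K/ρ_L) dṼ_K`, with `dṼ_K = ρ_K^n/n dS`. -/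
def dualOrliczMixedVol (n : ℕ) (φ : ℝ → ℝ)
    (K L : Set (EuclideanSpace ℝ (Fin n))) : ℝ :=
  ∫ u, φ (radialFn K u / radialFn L u) * ((radialFn K u) ^ n / n) ∂(sphereMeasure n)

open scoped Pointwise

section FiniteDimensional

variable {E : Type*} [NormedAddCommGroup E] [NormedSpace ℝ E] [FiniteDimensional ℝ E]
  [MeasurableSpace E] [BorelSpace E] (μ : Measure E)

open Module in
theorem integral_eq_integral_toSphere_setIntegral_Ioi {F : Type*} [NormedAddCommGroup F]
    [NormedSpace ℝ F] [Nontrivial E] [μ.IsAddHaarMeasure] {f : E → F} (hf : Integrable f μ) :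
    ∫ x, f x ∂μ =
      ∫ u, (∫ r in Ioi (0 : ℝ), r ^ (finrank ℝ E - 1) • f (r • (u : E))) ∂μ.toSphere := by
  set g : sphere (0 : E) 1 × Ioi (0 : ℝ) → F := fun p => f ((p.2 : ℝ) • (p.1 : E))
  have hpolar := μ.measurePreserving_homeomorphUnitSphereProd
  have hg : ∀ x : ({0}ᶜ : Set E), g (homeomorphUnitSphereProd E x) = f x := fun x => by
    simp [g, smul_inv_smul₀ (norm_ne_zero_iff.2 x.2)]
  have hgint : Integrable g (μ.toSphere.prod (Measure.volumeIoiPow (finrank ℝ E - 1))) := by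
    rw [← hpolar.integrable_comp_emb (Homeomorph.measurableEmbedding _)]
    simpa only [Function.comp_def, hg] using
      (integrableOn_iff_comap_subtypeVal (measurableSet_singleton 0).compl).1 hf.integrableOn
  calc ∫ x, f x ∂μ = ∫ x : ({0}ᶜ : Set E), f x ∂(μ.comap (↑)) := by
        rw [integral_subtype_comap (measurableSet_singleton _).compl, restrict_compl_singleton]
    _ = ∫ p, g p ∂(μ.toSphere.prod (Measure.volumeIoiPow (finrank ℝ E - 1))) := by
        simp only [← hg]
        exact hpolar.integral_comp (Homeomorph.measurableEmbedding _) g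
    _ = _ := integral_prod g hgint
    _ = _ := by
        congr 1 with u
        simp only [Measure.volumeIoiPow, ENNReal.ofReal]
        rw [integral_withDensity_eq_integral_smul
            (measurable_subtype_coe.pow_const _).real_toNNReal,
          integral_subtype_comap measurableSet_Ioi
            (fun r : ℝ => Real.toNNReal (r ^ (finrank ℝ E - 1)) • f (r • (u : E)))]
        refine setIntegral_congr_fun measurableSet_Ioi fun r hr => ?_
        rw [NNReal.smul_def, Real.coe_toNNReal _ (pow_nonneg (le_of_lt hr) _)]

theorem IsCompact.integrableOn_of_continuousOn_compl_zero_of_smul_eq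
    [IsFiniteMeasureOnCompacts μ] {s : Set E} (hs : IsCompact s) {f : E → ℝ}
    (hf : ContinuousOn f {0}ᶜ) (hhom : ∀ c : ℝ, 0 < c → ∀ x, f (c • x) = f x) :
    IntegrableOn f s μ := by
  obtain ⟨C, hC⟩ := (isCompact_sphere (0 : E) 1).exists_bound_of_continuousOn
    (hf.mono fun x hx => ne_of_mem_sphere hx one_ne_zero)
  have hbound : ∀ x, ‖f x‖ ≤ max C ‖f 0‖ := by
    intro x
    rcases eq_or_ne x 0 with rfl | hx
    · exact le_max_right _ _
    have hxn : 0 < ‖x‖ := norm_pos_iff.2 hx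
    rw [← hhom ‖x‖⁻¹ (inv_pos.2 hxn) x]
    refine (hC _ ?_).trans (le_max_left _ _)
    rw [mem_sphere_zero_iff_norm, norm_smul, norm_inv, norm_norm, inv_mul_cancel₀ hxn.ne']
  exact Measure.integrableOn_of_bounded hs.measure_lt_top.ne
    (measurable_of_continuousOn_compl_singleton 0 hf).aestronglyMeasurable
    (.of_forall hbound)

theorem setIntegral_image_linearEquiv [μ.IsAddHaarMeasure] (T : E ≃ₗ[ℝ] E) {s : Set E}
    (hs : MeasurableSet s) (f : E → ℝ) :
    ∫ x in T '' s, f x ∂μ = |LinearMap.det (T : E →ₗ[ℝ] E)| * ∫ y in s, f (T y) ∂μ := by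
  let e := T.toContinuousLinearEquiv
  rw [show T '' s = (e : E →L[ℝ] E) '' s from rfl,
    integral_image_eq_integral_abs_det_fderiv_smul μ hs
      (fun x _ => (e : E →L[ℝ] E).hasFDerivAt.hasFDerivWithinAt) e.injective.injOn,
    ← integral_const_mul]
  rfl

end FiniteDimensional

theorem radialFn_smul {n : ℕ} (K : Set (EuclideanSpace ℝ (Fin n))) (x : EuclideanSpace ℝ (Fin n))
    {c : ℝ} (hc : 0 < c) : radialFn K (c • x) = c⁻¹ * radialFn K x := by
  have : {r : ℝ | 0 ≤ r ∧ r • c • x ∈ K} = c⁻¹ • {r : ℝ | 0 ≤ r ∧ r • x ∈ K} := by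
    ext r
    rw [mem_smul_set_iff_inv_smul_mem₀ (inv_ne_zero hc.ne'), inv_inv, smul_eq_mul]
    simp only [mem_ofPred_eq, smul_smul, mul_comm c r, mul_nonneg_iff_of_pos_right hc]
  rw [radialFn, radialFn, this, Real.sSup_smul_of_nonneg (inv_nonneg.2 hc.le), smul_eq_mul]

theorem radialFn_image {n : ℕ} (T : EuclideanSpace ℝ (Fin n) ≃ₗ[ℝ] EuclideanSpace ℝ (Fin n))
    (K : Set (EuclideanSpace ℝ (Fin n))) (x : EuclideanSpace ℝ (Fin n)) :
    radialFn (T '' K) x = radialFn K (T.symm x) := by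
  simp only [radialFn, T.image_eq_preimage_symm, mem_preimage, map_smul]

namespace IsStarBody

variable {n : ℕ} {K : Set (EuclideanSpace ℝ (Fin n))} {x : EuclideanSpace ℝ (Fin n)} {r : ℝ}

theorem bddAbove_setOf_smul_mem (hK : IsStarBody K) (hx : x ≠ 0) :
    BddAbove {r : ℝ | 0 ≤ r ∧ r • x ∈ K} := by
  obtain ⟨R, hR⟩ := hK.1.isBounded.subset_closedBall 0
  refine ⟨R / ‖x‖, fun r ⟨hr, hrx⟩ => (le_div_iff₀ (norm_pos_iff.2 hx)).2 ?_⟩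
  simpa [norm_smul, abs_of_nonneg hr] using hR hrx

theorem le_radialFn (hK : IsStarBody K) (hx : x ≠ 0) (hr : 0 ≤ r) (hrx : r • x ∈ K) :
    r ≤ radialFn K x :=
  le_csSup (hK.bddAbove_setOf_smul_mem hx) ⟨hr, hrx⟩

theorem radialFn_smul_self_mem (hK : IsStarBody K) (hx : x ≠ 0) : radialFn K x • x ∈ K := by
  have hclosed : IsClosed {r : ℝ | 0 ≤ r ∧ r • x ∈ K} :=
    isClosed_Ici.inter (hK.1.isClosed.preimage (continuous_id.smul continuous_const))
  have h0 : (0 : ℝ) ∈ {r : ℝ | 0 ≤ r ∧ r • x ∈ K} :=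
    ⟨le_rfl, by simpa using interior_subset hK.2.1⟩
  exact (hclosed.csSup_mem ⟨0, h0⟩ (hK.bddAbove_setOf_smul_mem hx)).2

theorem radialFn_pos (hK : IsStarBody K) (hx : x ≠ 0) : 0 < radialFn K x := by
  obtain ⟨ε, hε, hball⟩ := Metric.mem_nhds_iff.1 (mem_interior_iff_mem_nhds.1 hK.2.1)
  have hxn : 0 < ‖x‖ := norm_pos_iff.2 hx
  have hmem : (ε / (2 * ‖x‖)) • x ∈ K := hball <| by
    rw [mem_ball_zero_iff, norm_smul, Real.norm_of_nonneg (by positivity)]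
    field_simp
    linarith
  exact (by positivity : 0 < ε / (2 * ‖x‖)).trans_le (hK.le_radialFn hx (by positivity) hmem)

theorem smul_mem_iff (hK : IsStarBody K) (hx : x ≠ 0) (hr : 0 ≤ r) :
    r • x ∈ K ↔ r ≤ radialFn K x := by
  refine ⟨hK.le_radialFn hx hr, fun hle => ?_⟩
  have hρ := hK.radialFn_pos hx
  simpa [smul_smul, div_mul_cancel₀ r hρ.ne'] using
    hK.2.2.1 _ (hK.radialFn_smul_self_mem hx) (r / radialFn K x)
      ⟨div_nonneg hr hρ.le, div_le_one_of_le₀ hle hρ.le⟩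

theorem radialFn_continuousOn (hK : IsStarBody K) :
    ContinuousOn (radialFn K) {0}ᶜ := by
  rw [continuousOn_iff_continuous_domRestrict]
  have h : ({0}ᶜ : Set (EuclideanSpace ℝ (Fin n))).domRestrict (radialFn K) =
      fun x : ({0}ᶜ : Set (EuclideanSpace ℝ (Fin n))) => ‖(x : EuclideanSpace ℝ (Fin n))‖⁻¹ *
        radialFn K (homeomorphUnitSphereProd _ x).1 := by
    ext x
    have hx : ‖(x : EuclideanSpace ℝ (Fin n))‖ ≠ 0 := norm_ne_zero_iff.2 x.2
    simp [radialFn_smul K _ (inv_pos.2 (norm_pos_iff.2 x.2)), hx]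
  rw [h]
  exact (continuous_subtype_val.norm.inv₀ fun x => norm_ne_zero_iff.2 x.2).mul
    (hK.2.2.2.comp (continuous_fst.comp (homeomorphUnitSphereProd _).continuous))

theorem image (hK : IsStarBody K)
    (T : EuclideanSpace ℝ (Fin n) ≃ₗ[ℝ] EuclideanSpace ℝ (Fin n)) : IsStarBody (T '' K) := by
  let e := T.toContinuousLinearEquiv
  refine ⟨hK.1.image e.continuous, ?_, ?_, ?_⟩
  · rw [show T '' K = e.toHomeomorph '' K from rfl, ← Homeomorph.image_interior]
    exact ⟨0, hK.2.1, map_zero T⟩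
  · rintro _ ⟨y, hy, rfl⟩ t ht
    exact ⟨t • y, hK.2.2.1 y hy t ht, map_smul T t y⟩
  · simp only [radialFn_image]
    refine hK.radialFn_continuousOn.comp_continuous
      (e.symm.continuous.comp continuous_subtype_val) fun u => ?_
    simpa using ne_of_mem_sphere u.2 one_ne_zero

theorem setIntegral_Ioi_pow_smul_indicator (hK : IsStarBody K) (hn : 0 < n) (hx : x ≠ 0)
    {f : EuclideanSpace ℝ (Fin n) → ℝ} (hf : ∀ c : ℝ, 0 < c → f (c • x) = f x) :
    ∫ r in Ioi (0 : ℝ), r ^ (n - 1) • K.indicator f (r • x) = radialFn K x ^ n / n * f x := by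
  have hρ := (hK.radialFn_pos hx).le
  calc ∫ r in Ioi (0 : ℝ), r ^ (n - 1) • K.indicator f (r • x)
      = ∫ r in Ioi (0 : ℝ), (Ioc 0 (radialFn K x)).indicator (fun r => r ^ (n - 1) * f x) r := by
        refine setIntegral_congr_fun measurableSet_Ioi fun r (hr : 0 < r) => ?_
        by_cases hle : r ≤ radialFn K x
        · rw [indicator_of_mem ((hK.smul_mem_iff hx hr.le).2 hle),
            indicator_of_mem (mem_Ioc.2 ⟨hr, hle⟩), hf r hr, smul_eq_mul]
        · rw [indicator_of_notMem (mt (hK.smul_mem_iff hx hr.le).1 hle),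
            indicator_of_notMem fun h => hle h.2, smul_zero]
    _ = (∫ r in (0)..radialFn K x, r ^ (n - 1)) * f x := by
        rw [integral_indicator measurableSet_Ioc, Measure.restrict_restrict measurableSet_Ioc,
          inter_eq_self_of_subset_left Ioc_subset_Ioi_self, integral_mul_const,
          intervalIntegral.integral_of_le hρ]
    _ = radialFn K x ^ n / n * f x := by
        rw [integral_pow, Nat.sub_add_cancel hn, Nat.cast_pred hn, sub_add_cancel,
          zero_pow hn.ne', sub_zero]

theorem integral_mul_radialFn_pow_div (hK : IsStarBody K) (hn : 0 < n)
    {f : EuclideanSpace ℝ (Fin n) → ℝ} (hf : ContinuousOn f {0}ᶜ)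
    (hhom : ∀ c : ℝ, 0 < c → ∀ x, f (c • x) = f x) :
    ∫ u, f u * (radialFn K u ^ n / n) ∂sphereMeasure n = ∫ x in K, f x := by
  have : Nonempty (Fin n) := ⟨⟨0, hn⟩⟩
  have hKf : Integrable (K.indicator f) :=
    (integrable_indicator_iff hK.1.isClosed.measurableSet).2
      (hK.1.integrableOn_of_continuousOn_compl_zero_of_smul_eq volume hf hhom)
  rw [← integral_indicator hK.1.isClosed.measurableSet,
    integral_eq_integral_toSphere_setIntegral_Ioi volume hKf, finrank_euclideanSpace_fin,
    sphereMeasure]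
  congr 1 with u
  rw [hK.setIntegral_Ioi_pow_smul_indicator hn (ne_of_mem_sphere u.2 one_ne_zero)
    fun c hc => hhom c hc u, mul_comm]

end IsStarBody

theorem dualOrliczMixedVol_eq_setIntegral {n : ℕ} (hn : 0 < n) {φ : ℝ → ℝ}
    (hφ : ContinuousOn φ (Ioi 0)) {K L : Set (EuclideanSpace ℝ (Fin n))} (hK : IsStarBody K)
    (hL : IsStarBody L) :
    dualOrliczMixedVol n φ K L = ∫ x in K, φ (radialFn K x / radialFn L x) := by
  refine hK.integral_mul_radialFn_pow_div hn (f := fun x => φ (radialFn K x / radialFn L x)) ?_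
    fun c hc x => ?_
  · refine hφ.comp (hK.radialFn_continuousOn.div hL.radialFn_continuousOn
      fun x hx => (hL.radialFn_pos hx).ne') fun x hx => ?_
    exact div_pos (hK.radialFn_pos hx) (hL.radialFn_pos hx)
  · rw [radialFn_smul K x hc, radialFn_smul L x hc, mul_div_mul_left _ _ (inv_ne_zero hc.ne')]

theorem dualOrliczMixedVol_zero (φ : ℝ → ℝ) (K L : Set (EuclideanSpace ℝ (Fin 0))) :
    dualOrliczMixedVol 0 φ K L = 0 := by
  have : IsEmpty (sphere (0 : EuclideanSpace ℝ (Fin 0)) 1) :=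
    ⟨fun u => by simpa [Subsingleton.elim (u : EuclideanSpace ℝ (Fin 0)) 0] using u.2⟩
  simp [dualOrliczMixedVol]

theorem dualOrliczMixedVol_linear_map_general
    (n : ℕ) (K L : Set (EuclideanSpace ℝ (Fin n)))
    (hK : IsStarBody K) (hL : IsStarBody L) (φ : ℝ → ℝ)
    (hφconv : ConvexOn ℝ (Ici (0 : ℝ)) φ)
    (T : EuclideanSpace ℝ (Fin n) ≃ₗ[ℝ] EuclideanSpace ℝ (Fin n)) :
    dualOrliczMixedVol n φ (T '' K) L =
      |LinearMap.det (T : EuclideanSpace ℝ (Fin n) →ₗ[ℝ] EuclideanSpace ℝ (Fin n))| *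
        dualOrliczMixedVol n φ K (T.symm '' L) := by
  rcases n.eq_zero_or_pos with rfl | hn
  · simp only [dualOrliczMixedVol_zero, mul_zero]
  have hφ : ContinuousOn φ (Ioi 0) := by simpa using hφconv.continuousOn_interior
  rw [dualOrliczMixedVol_eq_setIntegral hn hφ (hK.image T) hL,
    dualOrliczMixedVol_eq_setIntegral hn hφ hK (hL.image T.symm),
    setIntegral_image_linearEquiv volume T hK.1.isClosed.measurableSet]
  simp only [radialFn_image, T.symm_apply_apply, T.symm_symm]

/-- For star bodies `K, L` about the origin, `φ ∈ Φ`, and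
`T ∈ GL(n)`: `Ṽ_φ(TK, L) = |det T| · Ṽ_φ(K, T⁻¹L)`. -/
theorem dualOrliczMixedVol_linear_map
    (n : ℕ) (hn : 0 < n) (K L : Set (EuclideanSpace ℝ (Fin n)))
    (hK : IsStarBody K) (hL : IsStarBody L) (φ : ℝ → ℝ)
    (hφconv : ConvexOn ℝ (Ici (0 : ℝ)) φ)
    (hφmono : StrictMonoOn φ (Ici (0 : ℝ)))
    (hφ0 : φ 0 = 0)
    (T : EuclideanSpace ℝ (Fin n) ≃ₗ[ℝ] EuclideanSpace ℝ (Fin n)) :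
    dualOrliczMixedVol n φ (T '' K) L =
      |LinearMap.det (T : EuclideanSpace ℝ (Fin n) →ₗ[ℝ] EuclideanSpace ℝ (Fin n))| *
        dualOrliczMixedVol n φ K (T.symm '' L) :=
  dualOrliczMixedVol_linear_map_general n K L hK hL φ hφconv T
end
end

section
/- Let K be a star body about the origin in ℝ^n, φ ∈ Φ, and 1 ≤ p < q < ∞. Then V(L_1 K) ≤ V(L_φ K) ≤ V(L_{φ^p} K) ≤ V(L_{φ^q} K) ≤ V(L_∞ K), where L_∞ K is the minimal-volume origin-symmetric ellipsoid containing K. -/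
open MeasureTheory Metric Set

noncomputable section

/-- The normalized dual conical measure `dV_K^* = ρ_K^n/(n V(K)) dS`. -/
def normDualConical (n : ℕ) (K : Set (EuclideanSpace ℝ (Fin n))) :
    Measure (sphere (0 : EuclideanSpace ℝ (Fin n)) 1) :=
  (sphereMeasure n).withDensity fun u =>
    ENNReal.ofReal ((radialFn K u) ^ n / (n * (volume K).toReal))

/-- `O_φ(K,L) = inf {t > 0 : ∫ φ (ρ_K/(t ρ_L)) dV_K^* ≤ φ 1}`
(equivalently, `φ⁻¹ (∫ φ (ρ_K/(t ρ_L)) dV_K^*) ≤ 1`). -/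
def Ofun (n : ℕ) (φ : ℝ → ℝ) (K L : Set (EuclideanSpace ℝ (Fin n))) : ℝ :=
  sInf {t : ℝ | 0 < t ∧
    ∫ u, φ (radialFn K u / (t * radialFn L u)) ∂(normDualConical n K) ≤ φ 1}

/-- An origin-symmetric (nondegenerate) ellipsoid: the image of the closed unit
ball under an invertible linear map. -/
def IsEllipsoid {n : ℕ} (E : Set (EuclideanSpace ℝ (Fin n))) : Prop :=
  ∃ T : EuclideanSpace ℝ (Fin n) ≃ₗ[ℝ] EuclideanSpace ℝ (Fin n),
    E = T '' Metric.closedBall 0 1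

/-- `E` is the Orlicz-Legendre ellipsoid `L_ψ K`: an origin-symmetric ellipsoid
with Orlicz norm constraint `‖ρ_K/ρ_E : V_K^*‖_ψ ≤ 1` (equivalently
`O_ψ(K,E) ≤ 1`) of minimal volume among all such ellipsoids. -/
def IsOrliczLegendre (n : ℕ) (ψ : ℝ → ℝ) (K E : Set (EuclideanSpace ℝ (Fin n))) : Prop :=
  IsEllipsoid E ∧ Ofun n ψ K E ≤ 1 ∧
    ∀ E' : Set (EuclideanSpace ℝ (Fin n)), IsEllipsoid E' → Ofun n ψ K E' ≤ 1 →
      volume E ≤ volume E'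

/-
For a fixed ellipsoid `E` and `t > 0`, put `g = ρ_K / (t ρ_E)`, a continuous nonnegative function
on the sphere. Since `V(K) = (1/n) ∫ ρ_K^n dS` (polar coordinates), `V_K^*` is a probability
measure, and Jensen's inequality gives, for convex strictly increasing `ψ` on `[0, ∞)`,
`∫ ψ ∘ g ≤ ψ 1 → ∫ g ≤ 1`. Applied to `φ`, to `x ↦ x^p` and to `x ↦ x^(q/p)`, this shows that the
admissible `t` in `O_{φ^q}(K, E)` are admissible in `O_{φ^p}`, then in `O_φ`, then in `O_1`, so
`O_1 ≤ O_φ ≤ O_{φ^p} ≤ O_{φ^q}`; and `K ⊆ E` makes `t = 1` admissible for every `ψ`. Hence each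
ellipsoid competing for a later Orlicz–Legendre ellipsoid competes for the earlier ones, and the
minimal volumes increase along the chain.
-/

open Filter Topology
open scoped ENNReal

section RadialFunction

variable {n : ℕ} {K L : Set (EuclideanSpace ℝ (Fin n))} {x : EuclideanSpace ℝ (Fin n)}

lemma bddAbove_setOf_smul_mem (hK : Bornology.IsBounded K) (hx : x ≠ 0) :
    BddAbove {r : ℝ | 0 ≤ r ∧ r • x ∈ K} := by
  obtain ⟨R, hR⟩ := hK.subset_closedBall 0
  refine ⟨R / ‖x‖, fun r ⟨hr0, hrK⟩ => ?_⟩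
  have hrR : ‖r • x‖ ≤ R := mem_closedBall_zero_iff.1 (hR hrK)
  rw [norm_smul, Real.norm_of_nonneg hr0] at hrR
  exact (le_div_iff₀ (norm_pos_iff.2 hx)).2 hrR

lemma radialFn_pos (hK : Bornology.IsBounded K) (hK0 : 0 ∈ interior K) (hx : x ≠ 0) :
    0 < radialFn K x := by
  obtain ⟨ε, hε, hball⟩ := Metric.isOpen_iff.1 isOpen_interior 0 hK0
  have hx' : 0 < ‖x‖ := norm_pos_iff.2 hx
  have hmem : ε / (2 * ‖x‖) ∈ {r : ℝ | 0 ≤ r ∧ r • x ∈ K} := by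
    refine ⟨by positivity, interior_subset (hball ?_)⟩
    have hnorm : ε / (2 * ‖x‖) * ‖x‖ = ε / 2 := by field_simp
    rw [mem_ball_zero_iff, norm_smul, Real.norm_of_nonneg (by positivity), hnorm]
    linarith
  exact (by positivity : 0 < ε / (2 * ‖x‖)).trans_le
    (le_csSup (bddAbove_setOf_smul_mem hK hx) hmem)

lemma radialFn_nonneg (hK : Bornology.IsBounded K) (hK0 : 0 ∈ K) (hx : x ≠ 0) :
    0 ≤ radialFn K x :=
  le_csSup (bddAbove_setOf_smul_mem hK hx) ⟨le_rfl, by rwa [zero_smul]⟩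

lemma radialFn_mono (hL : Bornology.IsBounded L) (hK0 : 0 ∈ K) (hKL : K ⊆ L) (hx : x ≠ 0) :
    radialFn K x ≤ radialFn L x :=
  csSup_le_csSup (bddAbove_setOf_smul_mem hL hx) ⟨0, le_rfl, by rwa [zero_smul]⟩
    fun _ hr => ⟨hr.1, hKL hr.2⟩

lemma setOf_smul_mem_eq_Icc_radialFn (hKc : IsCompact K) (hK0 : 0 ∈ K)
    (hKs : ∀ y ∈ K, ∀ t : ℝ, t ∈ Icc (0 : ℝ) 1 → t • y ∈ K) (hx : x ≠ 0) :
    {r : ℝ | 0 ≤ r ∧ r • x ∈ K} = Icc 0 (radialFn K x) := by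
  have hbdd := bddAbove_setOf_smul_mem hKc.isBounded hx
  have hclosed : IsClosed {r : ℝ | 0 ≤ r ∧ r • x ∈ K} :=
    isClosed_Ici.inter (hKc.isClosed.preimage (continuous_id.smul continuous_const))
  have hmem : radialFn K x • x ∈ K :=
    (hclosed.csSup_mem ⟨0, le_rfl, by rwa [zero_smul]⟩ hbdd).2
  refine Subset.antisymm (fun r hr => ⟨hr.1, le_csSup hbdd hr⟩) fun r ⟨hr0, hrρ⟩ => ⟨hr0, ?_⟩
  rcases hrρ.eq_or_lt with rfl | hlt
  · exact hmem
  have hρ : 0 < radialFn K x := hr0.trans_lt hlt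
  simpa [smul_smul, div_mul_cancel₀ _ hρ.ne'] using
    hKs _ hmem (r / radialFn K x) ⟨div_nonneg hr0 hρ.le, (div_le_one hρ).2 hrρ⟩

lemma smul_mem_iff_le_radialFn (hKc : IsCompact K) (hK0 : 0 ∈ K)
    (hKs : ∀ y ∈ K, ∀ t : ℝ, t ∈ Icc (0 : ℝ) 1 → t • y ∈ K) (hx : x ≠ 0) {r : ℝ} (hr : 0 ≤ r) :
    r • x ∈ K ↔ r ≤ radialFn K x := by
  simpa [hr] using Set.ext_iff.1 (setOf_smul_mem_eq_Icc_radialFn hKc hK0 hKs hx) r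

lemma radialFn_image_closedBall (T : EuclideanSpace ℝ (Fin n) ≃ₗ[ℝ] EuclideanSpace ℝ (Fin n))
    (hx : x ≠ 0) : radialFn (T '' closedBall 0 1) x = ‖T.symm x‖⁻¹ := by
  have hTx : 0 < ‖T.symm x‖ := norm_pos_iff.2 (by simpa using hx)
  have hset : {r : ℝ | 0 ≤ r ∧ r • x ∈ T '' closedBall 0 1} = Icc 0 ‖T.symm x‖⁻¹ := by
    ext r
    simp only [mem_ofPred_eq, mem_Icc, T.image_eq_preimage_symm, mem_preimage, map_smul,
      mem_closedBall_zero_iff, norm_smul]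
    refine and_congr_right fun hr => ?_
    rw [Real.norm_of_nonneg hr, ← one_div, le_div_iff₀ hTx]
  rw [radialFn, hset, csSup_Icc (inv_nonneg.2 hTx.le)]

end RadialFunction

namespace IsEllipsoid

variable {n : ℕ} {E : Set (EuclideanSpace ℝ (Fin n))}

lemma isBounded (hE : IsEllipsoid E) : Bornology.IsBounded E := by
  obtain ⟨T, rfl⟩ := hE
  exact ((isCompact_closedBall 0 1).image
    (LinearMap.continuous_of_finiteDimensional T.toLinearMap)).isBounded

lemma radialFn_pos (hE : IsEllipsoid E) (u : sphere (0 : EuclideanSpace ℝ (Fin n)) 1) :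
    0 < radialFn E u := by
  obtain ⟨T, rfl⟩ := hE
  have hu : (u : EuclideanSpace ℝ (Fin n)) ≠ 0 := ne_of_mem_sphere u.2 one_ne_zero
  rw [radialFn_image_closedBall T hu]
  exact inv_pos.2 (norm_pos_iff.2 (by simpa using hu))

lemma continuous_radialFn (hE : IsEllipsoid E) :
    Continuous fun u : sphere (0 : EuclideanSpace ℝ (Fin n)) 1 => radialFn E u := by
  obtain ⟨T, rfl⟩ := hE
  have hu (u : sphere (0 : EuclideanSpace ℝ (Fin n)) 1) : (u : EuclideanSpace ℝ (Fin n)) ≠ 0 :=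
    ne_of_mem_sphere u.2 one_ne_zero
  simp_rw [radialFn_image_closedBall T (hu _)]
  exact ((LinearMap.continuous_of_finiteDimensional T.symm.toLinearMap).comp
    continuous_subtype_val).norm.inv₀ fun u => by simpa using hu u

end IsEllipsoid

section PolarCoordinates

open Measure

lemma volumeIoiPow_apply_Iic (m : ℕ) (x : Ioi (0 : ℝ)) :
    volumeIoiPow m (Iic x) = ENNReal.ofReal (x.1 ^ (m + 1) / (m + 1)) := by
  have hx : volumeIoiPow m {x} = 0 := withDensity_absolutelyContinuous _ _ <| by
    rw [comap_subtype_coe_apply measurableSet_Ioi]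
    simp
  rw [← volumeIoiPow_apply_Iio, measure_congr (Iio_ae_eq_Iic' hx)]

variable {n : ℕ} {K : Set (EuclideanSpace ℝ (Fin n))}

lemma preimage_prodMk_image_homeomorphUnitSphereProd (hK : IsStarBody K)
    (u : sphere (0 : EuclideanSpace ℝ (Fin n)) 1) :
    Prod.mk u ⁻¹' (homeomorphUnitSphereProd _ '' (Subtype.val ⁻¹' K)) =
      Iic ⟨radialFn K u, radialFn_pos hK.1.isBounded hK.2.1 (ne_of_mem_sphere u.2 one_ne_zero)⟩ := by
  ext r
  rw [Homeomorph.image_eq_preimage_symm]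
  simp only [mem_preimage, homeomorphUnitSphereProd, homeomorphSphereProd_symm_apply_coe]
  exact smul_mem_iff_le_radialFn hK.1 (interior_subset hK.2.1) hK.2.2.1
    (ne_of_mem_sphere u.2 one_ne_zero) r.2.le

lemma volume_eq_lintegral_radialFn_pow (hn : 0 < n) (hK : IsStarBody K) :
    volume K = ∫⁻ u, ENNReal.ofReal (radialFn K u ^ n / n) ∂sphereMeasure n := by
  have : Nontrivial (EuclideanSpace ℝ (Fin n)) :=
    Module.nontrivial_of_finrank_pos (by rwa [finrank_euclideanSpace_fin])
  set A : Set ({0}ᶜ : Set (EuclideanSpace ℝ (Fin n))) := Subtype.val ⁻¹' K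
  set h := homeomorphUnitSphereProd (EuclideanSpace ℝ (Fin n))
  have hA : MeasurableSet (h '' A) :=
    h.measurableEmbedding.measurableSet_image.2 (measurable_subtype_coe hK.1.measurableSet)
  have hpolar := measurePreserving_homeomorphUnitSphereProd
    (volume : Measure (EuclideanSpace ℝ (Fin n)))
  rw [finrank_euclideanSpace_fin] at hpolar
  calc volume K = volume.comap Subtype.val A := by
        rw [comap_subtype_coe_apply (measurableSet_singleton 0).compl, Subtype.image_preimage_coe,
          inter_comm, ← sdiff_eq, measure_sdiff_null (measure_singleton 0)]
    _ = (sphereMeasure n).prod (volumeIoiPow (n - 1)) (h '' A) := by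
        have := hpolar.measure_preimage hA.nullMeasurableSet
        rwa [preimage_image_eq _ h.injective] at this
    _ = _ := by
        rw [Measure.prod_apply hA]
        refine lintegral_congr fun u => ?_
        rw [preimage_prodMk_image_homeomorphUnitSphereProd hK, volumeIoiPow_apply_Iic,
          Nat.sub_add_cancel hn, Nat.cast_pred hn, sub_add_cancel]

lemma isProbabilityMeasure_normDualConical (hn : 0 < n) (hK : IsStarBody K) :
    IsProbabilityMeasure (normDualConical n K) := by
  have hV0 : volume K ≠ 0 := (measure_pos_of_nonempty_interior volume ⟨0, hK.2.1⟩).ne'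
  have hVtop : volume K ≠ ∞ := hK.1.measure_lt_top.ne
  have hdensity (u : sphere (0 : EuclideanSpace ℝ (Fin n)) 1) :
      ENNReal.ofReal (radialFn K u ^ n / (n * (volume K).toReal)) =
        ENNReal.ofReal (radialFn K u ^ n / n) * (volume K)⁻¹ := by
    rw [← div_div, ENNReal.ofReal_div_of_pos (ENNReal.toReal_pos hV0 hVtop),
      ENNReal.ofReal_toReal hVtop, div_eq_mul_inv]
  constructor
  rw [normDualConical, withDensity_apply _ MeasurableSet.univ, Measure.restrict_univ]
  simp_rw [hdensity]
  rw [lintegral_mul_const' _ _ (ENNReal.inv_ne_top.2 hV0), ← volume_eq_lintegral_radialFn_pow hn hK,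
    ENNReal.mul_inv_cancel hV0 hVtop]

end PolarCoordinates

section ProbabilityIntegrals

variable {α : Type*} [MeasurableSpace α] {μ : Measure α} [IsProbabilityMeasure μ]

/-- `0 ≤ c` is needed for the junk value `∫ f = 0` of a non-integrable `f`. -/
lemma integral_le_of_forall_le_of_nonneg {f : α → ℝ} {c : ℝ} (hc : 0 ≤ c) (hf : ∀ a, f a ≤ c) :
    ∫ a, f a ∂μ ≤ c := by
  by_cases hint : Integrable f μ
  · simpa using integral_mono hint (integrable_const c) hf
  · simpa [integral_undef hint] using hc

lemma integral_le_of_integral_comp_le {ψ : ℝ → ℝ} (hconv : ConvexOn ℝ (Ici 0) ψ)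
    (hcont : ContinuousOn ψ (Ici 0)) (hmono : StrictMonoOn ψ (Ici 0)) {g : α → ℝ}
    (hg0 : ∀ a, 0 ≤ g a) (hg : Integrable g μ) (hψg : Integrable (fun a => ψ (g a)) μ) {c : ℝ}
    (hc : 0 ≤ c) (hle : ∫ a, ψ (g a) ∂μ ≤ ψ c) : ∫ a, g a ∂μ ≤ c := by
  have hjensen : ψ (∫ a, g a ∂μ) ≤ ∫ a, ψ (g a) ∂μ :=
    hconv.map_integral_le hcont isClosed_Ici (ae_of_all _ hg0) hg hψg
  exact (hmono.le_iff_le (mem_Ici.2 (integral_nonneg hg0)) (mem_Ici.2 hc)).1 (hjensen.trans hle)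

lemma integral_rpow_le_of_integral_rpow_le {h : α → ℝ} (hh0 : ∀ a, 0 ≤ h a) {p q : ℝ}
    (hp : 0 < p) (hpq : p ≤ q) (hhp : Integrable (fun a => h a ^ p) μ)
    (hhq : Integrable (fun a => h a ^ q) μ) {c : ℝ} (hc : 0 ≤ c)
    (hle : ∫ a, h a ^ q ∂μ ≤ c ^ q) : ∫ a, h a ^ p ∂μ ≤ c ^ p := by
  have hr : 1 ≤ q / p := (one_le_div hp).2 hpq
  have hpow (x : ℝ) (hx : 0 ≤ x) : (x ^ p) ^ (q / p) = x ^ q := by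
    rw [← Real.rpow_mul hx, mul_div_cancel₀ _ hp.ne']
  refine integral_le_of_integral_comp_le (convexOn_rpow hr)
    (Real.continuous_rpow_const (by positivity)).continuousOn
    (Real.strictMonoOn_rpow_Ici_of_exponent_pos (by positivity))
    (fun a => Real.rpow_nonneg (hh0 a) p) hhp ?_ (Real.rpow_nonneg hc p) ?_
  · simpa only [hpow _ (hh0 _)] using hhq
  · simpa only [hpow _ (hh0 _), hpow c hc] using hle

end ProbabilityIntegrals

lemma ConvexOn.continuousWithinAt_Ici_of_monotoneOn {f : ℝ → ℝ} {y : ℝ}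
    (hf : ConvexOn ℝ (Ici y) f) (hmono : MonotoneOn f (Ici y)) :
    ContinuousWithinAt f (Ici y) y := by
  have hchord (x : ℝ) (hx : x ∈ Icc y (y + 1)) : f x ≤ f y + (x - y) * (f (y + 1) - f y) := by
    have h := hf.2 self_mem_Ici (by simp : y + 1 ∈ Ici y)
      (by linarith [hx.2] : 0 ≤ y + 1 - x) (by linarith [hx.1] : 0 ≤ x - y) (by ring)
    have hx' : (y + 1 - x) • y + (x - y) • (y + 1) = x := by simp only [smul_eq_mul]; ring
    rw [hx', smul_eq_mul, smul_eq_mul] at h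
    linarith
  have hlim : Tendsto (fun x => f y + (x - y) * (f (y + 1) - f y)) (𝓝[≥] y) (𝓝 (f y)) := by
    have hcont : Continuous fun x => f y + (x - y) * (f (y + 1) - f y) := by fun_prop
    simpa using (hcont.tendsto y).mono_left nhdsWithin_le_nhds
  refine tendsto_of_tendsto_of_tendsto_of_le_of_le' tendsto_const_nhds hlim
    (eventually_nhdsWithin_of_forall fun x hx => hmono self_mem_Ici hx hx) ?_
  filter_upwards [Icc_mem_nhdsGE (lt_add_one y)] with x hx using hchord x hx

lemma MonotoneOn.rpow_const {f : ℝ → ℝ} {s : Set ℝ} (hf : MonotoneOn f s)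
    (hnonneg : ∀ x ∈ s, 0 ≤ f x) {r : ℝ} (hr : 0 ≤ r) : MonotoneOn (fun x => f x ^ r) s :=
  fun x hx _ hy hxy => Real.rpow_le_rpow (hnonneg x hx) (hf hx hy hxy) hr

section Orlicz

variable {n : ℕ} {K L : Set (EuclideanSpace ℝ (Fin n))} {ψ ψ₁ ψ₂ : ℝ → ℝ}

def orliczAdmissibleSet (n : ℕ) (ψ : ℝ → ℝ) (K L : Set (EuclideanSpace ℝ (Fin n))) : Set ℝ :=
  {t : ℝ | 0 < t ∧
    ∫ u, ψ (radialFn K u / (t * radialFn L u)) ∂(normDualConical n K) ≤ ψ 1}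

lemma Ofun_eq_sInf_orliczAdmissibleSet : Ofun n ψ K L = sInf (orliczAdmissibleSet n ψ K L) :=
  rfl

lemma radialFn_div_nonneg (hK : IsStarBody K) (hL : ∀ u : sphere (0 : EuclideanSpace ℝ (Fin n)) 1,
    0 < radialFn L u) {t : ℝ} (ht : 0 ≤ t) (u : sphere (0 : EuclideanSpace ℝ (Fin n)) 1) :
    0 ≤ radialFn K u / (t * radialFn L u) :=
  div_nonneg (radialFn_nonneg hK.1.isBounded (interior_subset hK.2.1)
    (ne_of_mem_sphere u.2 one_ne_zero)) (mul_nonneg ht (hL u).le)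

variable [IsProbabilityMeasure (normDualConical n K)]

lemma mem_orliczAdmissibleSet_of_forall_le (hK : IsStarBody K)
    (hL : ∀ u : sphere (0 : EuclideanSpace ℝ (Fin n)) 1, 0 < radialFn L u)
    (hψ : MonotoneOn ψ (Ici 0)) (hψ1 : 0 ≤ ψ 1) {t : ℝ} (ht : 0 < t)
    (hle : ∀ u : sphere (0 : EuclideanSpace ℝ (Fin n)) 1, radialFn K u / (t * radialFn L u) ≤ 1) :
    t ∈ orliczAdmissibleSet n ψ K L :=
  ⟨ht, integral_le_of_forall_le_of_nonneg hψ1 fun u =>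
    hψ (radialFn_div_nonneg hK hL ht.le u) (mem_Ici.2 zero_le_one) (hle u)⟩

lemma orliczAdmissibleSet_nonempty (hK : IsStarBody K)
    (hLc : Continuous fun u : sphere (0 : EuclideanSpace ℝ (Fin n)) 1 => radialFn L u)
    (hL : ∀ u : sphere (0 : EuclideanSpace ℝ (Fin n)) 1, 0 < radialFn L u)
    (hψ : MonotoneOn ψ (Ici 0)) (hψ1 : 0 ≤ ψ 1) : (orliczAdmissibleSet n ψ K L).Nonempty := by
  obtain ⟨M, hM⟩ := (isCompact_range (hK.2.2.2.div hLc fun u => (hL u).ne')).bddAbove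
  refine ⟨max M 1, mem_orliczAdmissibleSet_of_forall_le hK hL hψ hψ1 (by positivity) fun u => ?_⟩
  rw [mul_comm, ← div_div, div_le_one (by positivity)]
  exact (hM ⟨u, rfl⟩).trans (le_max_left _ _)

lemma Ofun_le_Ofun (hK : IsStarBody K)
    (hLc : Continuous fun u : sphere (0 : EuclideanSpace ℝ (Fin n)) 1 => radialFn L u)
    (hL : ∀ u : sphere (0 : EuclideanSpace ℝ (Fin n)) 1, 0 < radialFn L u)
    (hψ₂ : MonotoneOn ψ₂ (Ici 0)) (hψ₂1 : 0 ≤ ψ₂ 1)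
    (himp : ∀ g : sphere (0 : EuclideanSpace ℝ (Fin n)) 1 → ℝ, Continuous g → (∀ u, 0 ≤ g u) →
      ∫ u, ψ₂ (g u) ∂(normDualConical n K) ≤ ψ₂ 1 → ∫ u, ψ₁ (g u) ∂(normDualConical n K) ≤ ψ₁ 1) :
    Ofun n ψ₁ K L ≤ Ofun n ψ₂ K L := by
  rw [Ofun_eq_sInf_orliczAdmissibleSet, Ofun_eq_sInf_orliczAdmissibleSet]
  exact csInf_le_csInf ⟨0, fun _ ht => ht.1.le⟩ (orliczAdmissibleSet_nonempty hK hLc hL hψ₂ hψ₂1)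
    fun _ ht => ⟨ht.1, himp _ (hK.2.2.2.div (continuous_const.mul hLc)
      fun u => (mul_pos ht.1 (hL u)).ne') (radialFn_div_nonneg hK hL ht.1.le) ht.2⟩

lemma Ofun_le_one_of_subset (hK : IsStarBody K) (hLb : Bornology.IsBounded L)
    (hL : ∀ u : sphere (0 : EuclideanSpace ℝ (Fin n)) 1, 0 < radialFn L u) (hKL : K ⊆ L)
    (hψ : MonotoneOn ψ (Ici 0)) (hψ1 : 0 ≤ ψ 1) : Ofun n ψ K L ≤ 1 := by
  rw [Ofun_eq_sInf_orliczAdmissibleSet]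
  exact csInf_le ⟨0, fun _ ht => ht.1.le⟩ <| mem_orliczAdmissibleSet_of_forall_le hK hL hψ hψ1 one_pos
    fun u => by
      rw [one_mul, div_le_one (hL u)]
      exact radialFn_mono hLb (interior_subset hK.2.1) hKL (ne_of_mem_sphere u.2 one_ne_zero)

lemma Ofun_le_Ofun_of_convexOn (hK : IsStarBody K)
    (hLc : Continuous fun u : sphere (0 : EuclideanSpace ℝ (Fin n)) 1 => radialFn L u)
    (hL : ∀ u : sphere (0 : EuclideanSpace ℝ (Fin n)) 1, 0 < radialFn L u)
    (hconv : ConvexOn ℝ (Ici 0) ψ) (hcont : ContinuousOn ψ (Ici 0))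
    (hmono : StrictMonoOn ψ (Ici 0)) (hψ1 : 0 ≤ ψ 1) :
    Ofun n (fun t => t) K L ≤ Ofun n ψ K L :=
  Ofun_le_Ofun hK hLc hL hmono.monotoneOn hψ1 fun _ hg hg0 hle =>
    integral_le_of_integral_comp_le hconv hcont hmono hg0
      (hg.integrable_of_hasCompactSupport (.of_compactSpace _))
      ((hcont.comp_continuous hg hg0).integrable_of_hasCompactSupport (.of_compactSpace _))
      zero_le_one hle

lemma Ofun_rpow_le_Ofun_rpow (hK : IsStarBody K)
    (hLc : Continuous fun u : sphere (0 : EuclideanSpace ℝ (Fin n)) 1 => radialFn L u)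
    (hL : ∀ u : sphere (0 : EuclideanSpace ℝ (Fin n)) 1, 0 < radialFn L u)
    {φ : ℝ → ℝ} (hcont : ContinuousOn φ (Ici 0)) (hmono : MonotoneOn φ (Ici 0))
    (hnonneg : ∀ x ∈ Ici (0 : ℝ), 0 ≤ φ x) {p q : ℝ} (hp : 0 < p) (hpq : p ≤ q) :
    Ofun n (fun t => φ t ^ p) K L ≤ Ofun n (fun t => φ t ^ q) K L := by
  have hq : 0 < q := hp.trans_le hpq
  have hφ1 : 0 ≤ φ 1 := hnonneg 1 (mem_Ici.2 zero_le_one)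
  refine Ofun_le_Ofun hK hLc hL (hmono.rpow_const hnonneg hq.le) (Real.rpow_nonneg hφ1 q)
    fun g hg hg0 hle => ?_
  have hint (r : ℝ) (hr : 0 ≤ r) : Integrable (fun u => φ (g u) ^ r) (normDualConical n K) :=
    ((hcont.comp_continuous hg hg0).rpow_const fun _ => .inr hr).integrable_of_hasCompactSupport
      (.of_compactSpace _)
  exact integral_rpow_le_of_integral_rpow_le (fun u => hnonneg _ (hg0 u)) hp hpq
    (hint p hp.le) (hint q hq.le) hφ1 hle

end Orlicz

/-- Let `K` be a star body about the origin, `φ ∈ Φ`, and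
`1 ≤ p < q < ∞`.  Then
`V(L_1 K) ≤ V(L_φ K) ≤ V(L_{φ^p} K) ≤ V(L_{φ^q} K) ≤ V(L_∞ K)`, where
`L_∞ K` is the minimal-volume origin-symmetric ellipsoid containing `K`. -/
theorem orliczLegendre_volume_chain
    (n : ℕ) (hn : 0 < n) (K : Set (EuclideanSpace ℝ (Fin n))) (hK : IsStarBody K)
    (φ : ℝ → ℝ)
    (hφconv : ConvexOn ℝ (Ici (0 : ℝ)) φ)
    (hφmono : StrictMonoOn φ (Ici (0 : ℝ)))
    (hφ0 : φ 0 = 0)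
    (p q : ℝ) (hp : 1 ≤ p) (hpq : p < q)
    (E₁ Eφ Ep Eq Einf : Set (EuclideanSpace ℝ (Fin n)))
    (hE₁ : IsOrliczLegendre n (fun t => t) K E₁)
    (hEφ : IsOrliczLegendre n φ K Eφ)
    (hEp : IsOrliczLegendre n (fun t => φ t ^ p) K Ep)
    (hEq : IsOrliczLegendre n (fun t => φ t ^ q) K Eq)
    (hEinf : IsEllipsoid Einf ∧ K ⊆ Einf ∧
      ∀ E' : Set (EuclideanSpace ℝ (Fin n)), IsEllipsoid E' → K ⊆ E' →
        volume Einf ≤ volume E') :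
    volume E₁ ≤ volume Eφ ∧ volume Eφ ≤ volume Ep ∧
      volume Ep ≤ volume Eq ∧ volume Eq ≤ volume Einf := by
  have := isProbabilityMeasure_normDualConical hn hK
  obtain ⟨hEinf, hKEinf, -⟩ := hEinf
  have hφcont : ContinuousOn φ (Ici 0) :=
    hφconv.continuousOn_Ici (hφconv.continuousWithinAt_Ici_of_monotoneOn hφmono.monotoneOn)
  have hφnn (x : ℝ) (hx : x ∈ Ici 0) : 0 ≤ φ x := hφ0 ▸ hφmono.monotoneOn self_mem_Ici hx hx
  have hφ1 : 0 ≤ φ 1 := hφnn 1 (mem_Ici.2 zero_le_one)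
  have hp0 : 0 < p := one_pos.trans_le hp
  have hφ_le_φp : Ofun n φ K Ep ≤ Ofun n (fun t => φ t ^ p) K Ep := by
    simpa using Ofun_rpow_le_Ofun_rpow hK hEp.1.continuous_radialFn hEp.1.radialFn_pos hφcont
      hφmono.monotoneOn hφnn one_pos hp
  refine ⟨hE₁.2.2 _ hEφ.1 (le_trans ?_ hEφ.2.1), hEφ.2.2 _ hEp.1 (hφ_le_φp.trans hEp.2.1),
    hEp.2.2 _ hEq.1 (le_trans ?_ hEq.2.1), hEq.2.2 _ hEinf ?_⟩
  · exact Ofun_le_Ofun_of_convexOn hK hEφ.1.continuous_radialFn hEφ.1.radialFn_pos hφconv hφcont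
      hφmono hφ1
  · exact Ofun_rpow_le_Ofun_rpow hK hEq.1.continuous_radialFn hEq.1.radialFn_pos hφcont
      hφmono.monotoneOn hφnn hp0 hpq.le
  · exact Ofun_le_one_of_subset hK hEinf.isBounded hEinf.radialFn_pos hKEinf
      (hφmono.monotoneOn.rpow_const hφnn (hp0.trans hpq).le) (Real.rpow_nonneg hφ1 q)
end
end

section
/- Let F:[0,∞)^n → [0,∞) be continuous and convex with ∇F(e) = c·e for some c > 0, where e = (1,…,1). Then for all a ∈ (0,∞)^n with ∏_{j=1}^n a_j = 1, one has F(a) ≥ F(e). -/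
/-!
A convex function lies above its tangent hyperplanes, so
`F a - F e ≥ ⟪c • e, a - e⟫ = c (∑ aᵢ - n)`, and `∑ aᵢ ≥ n` when `∏ aᵢ = 1`
(AM-GM, obtained here by summing `log aᵢ ≤ aᵢ - 1`).
-/

open Finset

theorem Finset.card_le_sum_of_prod_eq_one {ι : Type*} (s : Finset ι) {a : ι → ℝ}
    (ha : ∀ i ∈ s, 0 < a i) (hprod : ∏ i ∈ s, a i = 1) : (#s : ℝ) ≤ ∑ i ∈ s, a i := by
  have hlog : ∑ i ∈ s, Real.log (a i) = 0 := by
    rw [← Real.log_prod fun i hi => (ha i hi).ne', hprod, Real.log_one]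
  have hsub : ∑ i ∈ s, Real.log (a i) ≤ ∑ i ∈ s, (a i - 1) :=
    sum_le_sum fun i hi => Real.log_le_sub_one_of_pos (ha i hi)
  simpa [hlog, sum_sub_distrib] using hsub

theorem ConvexOn.apply_sub_le_of_hasFDerivAt {E : Type*} [NormedAddCommGroup E] [NormedSpace ℝ E]
    {s : Set E} {f : E → ℝ} {f' : E →L[ℝ] ℝ} {x y : E} (hf : ConvexOn ℝ s f) (hx : x ∈ s)
    (hy : y ∈ s) (hf' : HasFDerivAt f f' x) : f' (y - x) ≤ f y - f x := by
  have hline : ConvexOn ℝ (AffineMap.lineMap (k := ℝ) x y ⁻¹' s)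
      (f ∘ AffineMap.lineMap (k := ℝ) x y) :=
    hf.comp_affineMap _
  have hderiv : HasDerivAt (f ∘ AffineMap.lineMap (k := ℝ) x y) (f' (y - x)) 0 := by
    rw [← AffineMap.lineMap_apply_zero x y (k := ℝ)] at hf'
    exact hf'.comp_hasDerivAt 0 AffineMap.hasDerivAt_lineMap
  simpa [slope_def_field] using
    hline.le_slope_of_hasDerivAt (by simpa using hx) (by simpa using hy) one_pos hderiv

theorem ConvexOn.inner_sub_le_of_hasGradientAt {E : Type*} [NormedAddCommGroup E]
    [InnerProductSpace ℝ E] [CompleteSpace E] {s : Set E} {f : E → ℝ} {g x y : E}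
    (hf : ConvexOn ℝ s f) (hx : x ∈ s) (hy : y ∈ s) (hg : HasGradientAt f g x) :
    inner ℝ g (y - x) ≤ f y - f x :=
  hf.apply_sub_le_of_hasFDerivAt hx hy hg.hasFDerivAt

theorem convex_gradient_min_on_prod_one_general
    (n : ℕ) (F : EuclideanSpace ℝ (Fin n) → ℝ)
    (hFconv : ConvexOn ℝ {a : EuclideanSpace ℝ (Fin n) | ∀ i, 0 ≤ a i} F)
    (c : ℝ) (hc : 0 < c)
    (hgrad : HasGradientAt F (c • (WithLp.toLp 2 (fun _ => 1) : EuclideanSpace ℝ (Fin n)))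
      (WithLp.toLp 2 (fun _ => 1) : EuclideanSpace ℝ (Fin n)))
    (a : EuclideanSpace ℝ (Fin n)) (ha : ∀ i, 0 < a i) (hprod : ∏ i, a i = 1) :
    F (WithLp.toLp 2 (fun _ => 1) : EuclideanSpace ℝ (Fin n)) ≤ F a := by
  set e : EuclideanSpace ℝ (Fin n) := WithLp.toLp 2 fun _ => 1
  have hsupport := hFconv.inner_sub_le_of_hasGradientAt (x := e) (y := a)
    (fun _ => zero_le_one) (fun i => (ha i).le) hgrad
  have hinner : inner ℝ (c • e) (a - e) = c * (∑ i, a i - n) := by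
    simp [e, PiLp.inner_apply, mul_comm, ← mul_sum]
  have hamgm : (n : ℝ) ≤ ∑ i, a i := by
    simpa using univ.card_le_sum_of_prod_eq_one (fun i _ => ha i) hprod
  rw [hinner] at hsupport
  linarith [mul_nonneg hc.le (sub_nonneg.2 hamgm)]

/-- Let `F : [0,∞)^n → [0,∞)` be continuous and convex with
gradient `∇F(e) = c • e` at `e = (1,…,1)` for some `c > 0`.  Then `F(a) ≥ F(e)`
for every `a ∈ (0,∞)^n` with `∏ a_j = 1`. -/
theorem convex_gradient_min_on_prod_one
    (n : ℕ) (hn : 0 < n) (F : EuclideanSpace ℝ (Fin n) → ℝ)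
    (hFcont : ContinuousOn F {a : EuclideanSpace ℝ (Fin n) | ∀ i, 0 ≤ a i})
    (hFconv : ConvexOn ℝ {a : EuclideanSpace ℝ (Fin n) | ∀ i, 0 ≤ a i} F)
    (hFnn : ∀ a : EuclideanSpace ℝ (Fin n), (∀ i, 0 ≤ a i) → 0 ≤ F a)
    (c : ℝ) (hc : 0 < c)
    (hgrad : HasGradientAt F (c • (WithLp.toLp 2 (fun _ => 1) : EuclideanSpace ℝ (Fin n)))
      (WithLp.toLp 2 (fun _ => 1) : EuclideanSpace ℝ (Fin n)))
    (a : EuclideanSpace ℝ (Fin n)) (ha : ∀ i, 0 < a i) (hprod : ∏ i, a i = 1) :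
    F (WithLp.toLp 2 (fun _ => 1) : EuclideanSpace ℝ (Fin n)) ≤ F a :=
  convex_gradient_min_on_prod_one_general n F hFconv c hc hgrad a ha hprod
end
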